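/- arXiv:1007.3692 — 2 statements merged into one kernel-verified Lean document; each statement's English description precedes it below -/
import Mathlib

section
/- For any set A ⊆ ℕ, the bounded jump A^b is Turing reducible to A ⊕ ∅′, where A ⊕ B = {2n : n ∈ A} ∪ {2n+1 : n ∈ B} and ∅′ = {x : φ_x(x)↓} is the halting set. -/
open Classical

/-- Characteristic function of a set of naturals (values in `{0,1}`). -/
noncomputable def chi (A : Set ℕ) (n : ℕ) : ℕ := if n ∈ A then 1 else 0

/-- An acceptable enumeration `φ_e` of the partial computable functions,
via Mathlib's codes for partial recursive functions. -/
def phi (e : ℕ) : ℕ →. ℕ := (Denumerable.ofNat Nat.Partrec.Code e).eval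

/-- The initial segment of (the characteristic function of) `A` of length `n`,
as a list of naturals. -/
noncomputable def initSeg (A : Set ℕ) (n : ℕ) : List ℕ := (List.range n).map (chi A)

/-- An effective enumeration `Φ_e` of the Turing functionals: the `e`-th functional
with oracle `A` on input `x` converges iff the `e`-th partial computable function halts
on `(σ, x)` for some initial segment `σ` of `A`; its value is obtained from the least
such initial segment. -/
noncomputable def Phi (e : ℕ) (A : Set ℕ) (x : ℕ) : Part ℕ :=
  ⟨∃ n, (phi e (Nat.pair (Encodable.encode (initSeg A n)) x)).Dom,
   fun h => (phi e (Nat.pair (Encodable.encode (initSeg A (Nat.find h))) x)).get (Nat.find_spec h)⟩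

/-- `A↾n = {m ∈ A : m ≤ n}`. -/
def restrictTo (A : Set ℕ) (n : ℕ) : Set ℕ := {m | m ∈ A ∧ m ≤ n}

/-- The bounded jump `A^b = {x : ∃ i ≤ x, φ_i(x)↓ ∧ Φ_x^{A↾φ_i(x)}(x)↓}`. -/
def bJump (A : Set ℕ) : Set ℕ :=
  {x | ∃ i ≤ x, ∃ h : (phi i x).Dom, (Phi x (restrictTo A ((phi i x).get h)) x).Dom}

/-- `A^{b₀} = {⟨e,i,j⟩ : φ_i(j)↓ ∧ Φ_e^{A↾φ_i(j)}(j)↓}`, coding triples with `Nat.pair`. -/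
def b0Jump (A : Set ℕ) : Set ℕ :=
  {n | ∃ e i j, n = Nat.pair e (Nat.pair i j) ∧
        ∃ h : (phi i j).Dom, (Phi e (restrictTo A ((phi i j).get h)) j).Dom}

/-- The simple jump `A^i = {x : Φ_x^{A↾x}(x)↓}`. -/
def iJump (A : Set ℕ) : Set ℕ := {x | (Phi x (restrictTo A x) x).Dom}

/-- `∅^{nb}`, the `n`-th iterate of the bounded jump of the empty set. -/
def bIter : ℕ → Set ℕ
  | 0 => (∅ : Set ℕ)
  | n + 1 => bJump (bIter n)

/-- The halting set `∅′ = {x : φ_x(x)↓}`. -/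
def K : Set ℕ := {x | (phi x x).Dom}

/-- The effective join `A ⊕ B = {2n : n ∈ A} ∪ {2n+1 : n ∈ B}`. -/
def join (A B : Set ℕ) : Set ℕ :=
  {n | (∃ m ∈ A, n = 2 * m) ∨ (∃ m ∈ B, n = 2 * m + 1)}

/-- `X ≤₁ Y`: one-reducibility via a total computable injection. -/
def oneReducible (X Y : Set ℕ) : Prop :=
  ∃ f : ℕ → ℕ, Computable f ∧ Function.Injective f ∧ ∀ x, x ∈ X ↔ f x ∈ Y

/-- `X ≤_bT Y`: bounded Turing (weak truth-table) reducibility. There are indices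
`e, j` with `φ_j` total such that `X(x) = Φ_e^{Y↾φ_j(x)}(x)` for all `x`. -/
def bTReducible (X Y : Set ℕ) : Prop :=
  ∃ e j, ∃ h : ∀ x, (phi j x).Dom,
    ∀ x, Phi e (restrictTo Y ((phi j x).get (h x))) x = Part.some (chi X x)

/-- `X ≤_T Y`: Turing reducibility. -/
def TReducible (X Y : Set ℕ) : Prop :=
  ∃ e, ∀ x, Phi e Y x = Part.some (chi X x)

/-- `X ≤_tt Y`: truth-table reducibility, i.e. Turing reducibility via a functional
that is total on all oracles. -/
def ttReducible (X Y : Set ℕ) : Prop :=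
  ∃ e, (∀ B : Set ℕ, ∀ x, (Phi e B x).Dom) ∧ ∀ x, Phi e Y x = Part.some (chi X x)

/-- `A` is `ω^k`-c.e.: ordinals below `ω^k` are coded by their lists of Cantor normal
form coefficients (length-`k` lists of naturals, most significant first), ordered
lexicographically.  There is a partial computable `ψ : ℕ × ω^k → {0,1}` such that for
every `n` some `ψ(n,β)` converges, and `A(n) = ψ(n,γ)` for the least converging `γ`. -/
def OmegaCE (k : ℕ) (A : Set ℕ) : Prop :=
  ∃ ψ : ℕ →. ℕ, Partrec ψ ∧ (∀ m y, y ∈ ψ m → y ≤ 1) ∧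
    ∀ n : ℕ, ∃ l : List ℕ, l.length = k ∧
      (∀ l' : List ℕ, l'.length = k → List.Lex (· < ·) l' l →
        ¬ (ψ (Nat.pair n (Encodable.encode l'))).Dom) ∧
      chi A n ∈ ψ (Nat.pair n (Encodable.encode l))

/-- The (lightface) `Σ_n` sets of naturals. -/
def SigmaN : ℕ → Set ℕ → Prop
  | 0 => fun S => ComputablePred (· ∈ S)
  | n + 1 => fun S => ∃ R : Set ℕ, SigmaN n R ∧ S = {x | ∃ y, Nat.pair x y ∉ R}

/-- The initial segment of `A` of length `n`, as a finite binary string. -/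
noncomputable def initSegB (A : Set ℕ) (n : ℕ) : List Bool :=
  (List.range n).map fun i => decide (i ∈ A)

/-- `A` is `n`-generic: for every `Σ_n` set `S` of (codes of) finite binary strings,
either some initial segment of `A` is in `S`, or some initial segment of `A` has no
extension in `S`. -/
def NGeneric (n : ℕ) (A : Set ℕ) : Prop :=
  ∀ S : Set ℕ, SigmaN n S →
    (∃ l, Encodable.encode (initSegB A l) ∈ S) ∨
    (∃ l, ∀ τ : List Bool, initSegB A l <+: τ → Encodable.encode τ ∉ S)

/-- The open subset of Cantor space generated by the set of strings `U` has measure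
`≤ 2^{-i}`: for every `n`, at most `2^n/2^i` strings of length `n` extend a string
of `U`. -/
def stringMeasureLe (U : Set (List Bool)) (i : ℕ) : Prop :=
  ∀ n : ℕ, ({σ : List Bool | σ.length = n ∧ ∃ τ ∈ U, τ <+: σ}.ncard) * 2 ^ i ≤ 2 ^ n

/-- `A` is `n`-random: for every uniformly `Σ_n` family `⟨U_i⟩` of sets of (codes of)
finite binary strings with `μ(U_i) ≤ 2^{-i}`, there is an `l` such that no initial
segment of `A` lies in `U_l`. -/
def NRandom (n : ℕ) (A : Set ℕ) : Prop :=
  ∀ U : Set ℕ, SigmaN n U →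
    (∀ i, stringMeasureLe {σ : List Bool | Nat.pair i (Encodable.encode σ) ∈ U} i) →
    ∃ l, ∀ m, Nat.pair l (Encodable.encode (initSegB A m)) ∉ U

/-- The code `c` codes a tt-condition (a finite sequence of positions together with a
truth table) satisfied by `A`. -/
def ttSatisfied (A : Set ℕ) (c : ℕ) : Prop :=
  ∃ p : List ℕ × List Bool, Encodable.decode c = some p ∧
    p.2.length = 2 ^ p.1.length ∧
    p.2.getD (p.1.foldr (fun x acc => 2 * acc + chi A x) 0) false = true

/-- `A^{tt}`: the set of codes of tt-conditions satisfied by `A`. -/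
def ttSet (A : Set ℕ) : Set ℕ := {c | ttSatisfied A c}

/-- Gerla's truth-table jump `A_tt = {x : φ_x(x)↓ ∧ φ_x(x) ∈ A^{tt}}`. -/
def gerlaJump (A : Set ℕ) : Set ℕ :=
  {x | ∃ h : (phi x x).Dom, (phi x x).get h ∈ ttSet A}


/-! Only finitely many `φ_i(x)` with `i ≤ x` converge, so some `L` exceeds all their values, and
whether one of them converges to a value `≥ L` is a c.e. question: one query to `∅′`. Once it is
answered negatively, `x ∈ A^b` depends only on `A↾L`, and given that finite segment it is again a
c.e. question: a second query to `∅′`. The reduction searches for such an `L`, reading the answers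
to both queries off the odd bits and `A↾L` off the even bits of `A ⊕ ∅′`. -/

open Nat.Partrec (Code)
open Nat.Partrec.Code Encodable

theorem chi_eq_chi_of_iff {X Y : Set ℕ} {a b : ℕ} (h : a ∈ X ↔ b ∈ Y) : chi X a = chi Y b := by
  simp only [chi, h]

theorem chi_join_double (A B : Set ℕ) (k : ℕ) : chi (join A B) (2 * k) = chi A k := by
  refine chi_eq_chi_of_iff ⟨?_, fun h => Or.inl ⟨k, h, rfl⟩⟩
  rintro (⟨m, hm, h⟩ | ⟨m, -, h⟩)
  · obtain rfl : k = m := by omega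
    exact hm
  · omega

theorem chi_join_double_add_one (A B : Set ℕ) (k : ℕ) :
    chi (join A B) (2 * k + 1) = chi B k := by
  refine chi_eq_chi_of_iff ⟨?_, fun h => Or.inr ⟨k, h, rfl⟩⟩
  rintro (⟨m, -, h⟩ | ⟨m, hm, h⟩)
  · omega
  · obtain rfl : k = m := by omega
    exact hm

theorem chi_restrictTo (A : Set ℕ) (m k : ℕ) :
    chi (restrictTo A m) k = if k ≤ m then chi A k else 0 := by
  unfold chi restrictTo
  split_ifs <;> simp_all

theorem getElem?_initSeg (Y : Set ℕ) (N p : ℕ) :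
    (initSeg Y N)[p]? = if p < N then some (chi Y p) else none := by
  split_ifs with h <;> simp [initSeg, h]

theorem getD_initSeg (Y : Set ℕ) {N p : ℕ} (h : p < N) : (initSeg Y N).getD p 0 = chi Y p := by
  simp [List.getD_eq_getElem?_getD, getElem?_initSeg, h]

theorem length_initSeg (Y : Set ℕ) (N : ℕ) : (initSeg Y N).length = N := by
  simp [initSeg]

def evenPart (σ : List ℕ) (L : ℕ) : List ℕ := (List.range L).map fun k => σ.getD (2 * k) 0

theorem evenPart_initSeg_join (A B : Set ℕ) {L N : ℕ} (h : 2 * L ≤ N) :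
    evenPart (initSeg (join A B) N) L = initSeg A L := by
  refine List.map_congr_left fun k hk => ?_
  rw [getD_initSeg _ (by rw [List.mem_range] at hk; omega), chi_join_double]

theorem getElem?_initSeg_join_odd (A B : Set ℕ) (N y : ℕ) :
    (initSeg (join A B) N)[2 * y + 1]? = if 2 * y + 1 < N then some (chi B y) else none := by
  rw [getElem?_initSeg, chi_join_double_add_one]

theorem TReducible.of_partrec {X Y : Set ℕ} {F : List ℕ → ℕ →. ℕ} (hF : Partrec₂ F)
    (hdom : ∀ x, ∃ N, (F (initSeg Y N) x).Dom)
    (hsound : ∀ x N, ∀ b ∈ F (initSeg Y N) x, b = chi X x) : TReducible X Y := by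
  let G : ℕ →. ℕ := fun p => F ((decode p.unpair.1 : Option (List ℕ)).getD []) p.unpair.2
  have hG : Nat.Partrec G := Partrec.nat_iff.1 <| hF.comp
    (Primrec.option_getD.comp (Primrec.decode.comp (Primrec.fst.comp Primrec.unpair))
      (Primrec.const [])).to_comp (Primrec.snd.comp Primrec.unpair).to_comp
  obtain ⟨c, hc⟩ := exists_code.1 hG
  have hphi : ∀ σ x, phi (encode c) (Nat.pair (encode σ) x) = F σ x := by
    intro σ x
    simp [phi, hc, G]
  refine ⟨encode c, fun x => Part.eq_some_iff.2 ?_⟩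
  have hD : ∃ N, (phi (encode c) (Nat.pair (encode (initSeg Y N)) x)).Dom := by
    simpa only [hphi] using hdom x
  exact ⟨hD, hsound x _ _ (by rw [← hphi]; exact Part.get_mem _)⟩

theorem REPred.exists_primrec_reduction_K {α : Type*} [Primcodable α] {p : α → Prop}
    (hp : REPred p) : ∃ g : α → ℕ, Primrec g ∧ ∀ a, g a ∈ K ↔ p a := by
  obtain ⟨c, hc⟩ := exists_code.1 <| Partrec.nat_iff.1 <|
    (Partrec.nat_iff.2 (Partrec.bind_decode₂_iff.1 hp)).comp
      (Primrec.fst.comp Primrec.unpair).to_comp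
  refine ⟨fun a => encode (curry c (encode a)),
    Primrec.encode.comp (primrec₂_curry.comp (Primrec.const c) Primrec.encode), fun a => ?_⟩
  simp only [K, phi, Set.mem_ofPred_eq, Denumerable.ofNat_encode, eval_curry, hc,
    Nat.unpair_pair, encodek₂, Part.coe_some, Part.bind_some, Part.map_Dom]
  exact ⟨fun ⟨h, _⟩ => h, fun h => ⟨h, trivial⟩⟩

theorem PrimrecRel.rePred_exists {α β : Type*} [Primcodable α] [Primcodable β]
    {R : α → β → Prop} (hR : PrimrecRel R) : REPred fun a => ∃ b, R a b := by
  obtain ⟨_, hdec⟩ := hR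
  have hf : Computable₂ fun a n =>
      (decode n : Option β).bind fun b => if R a b then some b else none :=
    (Primrec.option_bind (Primrec.decode.comp Primrec.snd)
      (Primrec.ite (PrimrecRel.comp ⟨_, hdec⟩ (Primrec.fst.comp Primrec.fst) Primrec.snd)
        (Primrec.option_some.comp Primrec.snd) (Primrec.const none)).to₂).to_comp
  refine (Partrec.rfindOpt hf).dom_re.of_eq fun a => ?_
  simp only [Nat.rfindOpt_dom, Option.mem_def, Option.bind_eq_some_iff, Option.ite_none_right_eq_some]
  exact ⟨fun ⟨_, _, _, _, h, _⟩ => ⟨_, h⟩, fun ⟨b, h⟩ => ⟨encode b, b, b, encodek b, h, rfl⟩⟩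

theorem primrec_evaln_ofNat {α : Type*} [Primcodable α] {t i x : α → ℕ} (ht : Primrec t)
    (hi : Primrec i) (hx : Primrec x) :
    Primrec fun a => evaln (t a) (Denumerable.ofNat Code (i a)) (x a) :=
  primrec_evaln.comp ((ht.pair ((Primrec.ofNat Code).comp hi)).pair hx)

def outputsAbove (x L : ℕ) : Prop := ∃ i ≤ x, ∃ m ∈ phi i x, L ≤ m

theorem exists_not_outputsAbove (x : ℕ) : ∃ L, ¬ outputsAbove x L := by
  have hfin : {m | ∃ i ≤ x, m ∈ phi i x}.Finite := by
    have : {m | ∃ i ≤ x, m ∈ phi i x} = ⋃ i ∈ Set.Iic x, {m | m ∈ phi i x} := by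
      ext; simp
    rw [this]
    exact (Set.finite_Iic x).biUnion fun i _ =>
      Set.Subsingleton.finite fun _ h₁ _ h₂ => Part.mem_unique h₁ h₂
  obtain ⟨B, hB⟩ := hfin.bddAbove
  exact ⟨B + 1, fun ⟨i, hi, m, hm, hL⟩ => by have := hB ⟨i, hi, hm⟩; omega⟩

theorem rePred_outputsAbove : REPred fun q : ℕ × ℕ => outputsAbove q.1 q.2 := by
  have hR : PrimrecRel fun (q : ℕ × ℕ) (w : ℕ × ℕ × ℕ) =>
      w.1 ≤ q.1 ∧ q.2 ≤ w.2.1 ∧ evaln w.2.2 (Denumerable.ofNat Code w.1) q.1 = some w.2.1 :=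
    (Primrec.nat_le.comp (Primrec.fst.comp Primrec.snd) (Primrec.fst.comp Primrec.fst)).and <|
      (Primrec.nat_le.comp (Primrec.snd.comp Primrec.fst)
        (Primrec.fst.comp (Primrec.snd.comp Primrec.snd))).and <|
      Primrec.eq.comp
        (primrec_evaln_ofNat (Primrec.snd.comp (Primrec.snd.comp Primrec.snd))
          (Primrec.fst.comp Primrec.snd) (Primrec.fst.comp Primrec.fst))
        (Primrec.option_some.comp (Primrec.fst.comp (Primrec.snd.comp Primrec.snd)))
  refine hR.rePred_exists.of_eq fun q => ?_
  simp only [outputsAbove, phi, evaln_complete, Option.mem_def]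
  constructor
  · rintro ⟨⟨i, m, t⟩, hi, hm, ht⟩
    exact ⟨i, hi, m, ⟨t, ht⟩, hm⟩
  · rintro ⟨i, hi, m, ⟨t, ht⟩, hm⟩
    exact ⟨⟨i, m, t⟩, hi, hm, ht⟩

def restrictSeg (τ : List ℕ) (m n : ℕ) : List ℕ :=
  (List.range n).map fun k => if k ≤ m then τ.getD k 0 else 0

theorem initSeg_restrictTo {A : Set ℕ} {m L : ℕ} (hm : m < L) (n : ℕ) :
    initSeg (restrictTo A m) n = restrictSeg (initSeg A L) m n := by
  refine List.map_congr_left fun k _ => ?_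
  rw [chi_restrictTo]
  split_ifs with hk
  · rw [getD_initSeg A (by omega)]
  · rfl

theorem primrec_restrictSeg {α : Type*} [Primcodable α] {τ : α → List ℕ} {m n : α → ℕ}
    (hτ : Primrec τ) (hm : Primrec m) (hn : Primrec n) :
    Primrec fun a => restrictSeg (τ a) (m a) (n a) :=
  Primrec.list_map (Primrec.list_range.comp hn)
    (Primrec.ite (Primrec.nat_le.comp Primrec.snd (hm.comp Primrec.fst))
      ((Primrec.list_getD 0).comp (hτ.comp Primrec.fst) Primrec.snd) (Primrec.const 0)).to₂

def haltsOnSegment (τ : List ℕ) (x : ℕ) : Prop :=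
  ∃ i ≤ x, ∃ m ∈ phi i x, ∃ n, (phi x (Nat.pair (encode (restrictSeg τ m n)) x)).Dom

theorem mem_bJump_iff_haltsOnSegment {A : Set ℕ} {x L : ℕ} (hL : ¬ outputsAbove x L) :
    x ∈ bJump A ↔ haltsOnSegment (initSeg A L) x := by
  have hlt : ∀ i ≤ x, ∀ m ∈ phi i x, m < L :=
    fun i hi m hm => not_le.1 fun h => hL ⟨i, hi, m, hm, h⟩
  refine exists_congr fun i => and_congr_right fun hi => ⟨?_, ?_⟩
  · rintro ⟨h, n, hn⟩
    refine ⟨_, Part.get_mem h, n, ?_⟩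
    rwa [← initSeg_restrictTo (hlt i hi _ (Part.get_mem h))]
  · rintro ⟨m, hm, n, hn⟩
    have hm' := hlt i hi m hm
    obtain ⟨h, rfl⟩ := hm
    exact ⟨h, n, by rwa [initSeg_restrictTo hm']⟩

theorem rePred_haltsOnSegment : REPred fun q : List ℕ × ℕ => haltsOnSegment q.1 q.2 := by
  have hR : PrimrecRel fun (q : List ℕ × ℕ) (w : ℕ × ℕ × ℕ × ℕ) =>
      w.1 ≤ q.2 ∧ evaln w.2.2.2 (Denumerable.ofNat Code w.1) q.2 = some w.2.1 ∧
        evaln w.2.2.2 (Denumerable.ofNat Code q.2)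
          (Nat.pair (encode (restrictSeg q.1 w.2.1 w.2.2.1)) q.2) ≠ none := by
    have ht : Primrec fun p : (List ℕ × ℕ) × ℕ × ℕ × ℕ × ℕ => p.2.2.2.2 :=
      Primrec.snd.comp (Primrec.snd.comp (Primrec.snd.comp Primrec.snd))
    have hm : Primrec fun p : (List ℕ × ℕ) × ℕ × ℕ × ℕ × ℕ => p.2.2.1 :=
      Primrec.fst.comp (Primrec.snd.comp Primrec.snd)
    have hx : Primrec fun p : (List ℕ × ℕ) × ℕ × ℕ × ℕ × ℕ => p.1.2 :=
      Primrec.snd.comp Primrec.fst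
    have hseg := primrec_restrictSeg (Primrec.fst.comp Primrec.fst) hm
      (Primrec.fst.comp (Primrec.snd.comp (Primrec.snd.comp Primrec.snd)))
    exact (Primrec.nat_le.comp (Primrec.fst.comp Primrec.snd) hx).and <|
      (Primrec.eq.comp (primrec_evaln_ofNat ht (Primrec.fst.comp Primrec.snd) hx)
        (Primrec.option_some.comp hm)).and <|
      (Primrec.eq.comp (primrec_evaln_ofNat ht hx
        (Primrec₂.natPair.comp (Primrec.encode.comp hseg) hx)) (Primrec.const none)).not
  refine hR.rePred_exists.of_eq fun q => ?_
  simp only [haltsOnSegment, Part.dom_iff_mem, phi, evaln_complete,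
    Option.mem_def, ← Option.isSome_iff_ne_none, Option.isSome_iff_exists]
  constructor
  · rintro ⟨⟨i, m, n, t⟩, hi, hm, y, hy⟩
    exact ⟨i, hi, m, ⟨t, hm⟩, n, y, t, hy⟩
  · rintro ⟨i, hi, m, ⟨t₁, hm⟩, n, y, t₂, hy⟩
    exact ⟨⟨i, m, n, max t₁ t₂⟩, hi, evaln_mono (le_max_left _ _) hm, y,
      evaln_mono (le_max_right _ _) hy⟩

section Attempt

variable (r₁ : ℕ × ℕ → ℕ) (r₂ : List ℕ × ℕ → ℕ)

/-- Reads `σ` as an initial segment of `A ⊕ ∅′`, where `r₁` and `r₂` are meant to reduce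
`outputsAbove` and `haltsOnSegment` to `∅′`; `none` when `σ` is too short or refutes that `L`
bounds the relevant `φ_i(x)`. -/
def bJumpAttempt (σ : List ℕ) (x L : ℕ) : Option ℕ :=
  if σ[2 * r₁ (x, L) + 1]? = some 0 ∧ 2 * L ≤ σ.length then σ[2 * r₂ (evenPart σ L, x) + 1]?
  else none

variable {r₁ r₂}

theorem primrec_bJumpAttempt (hr₁ : Primrec r₁) (hr₂ : Primrec r₂) :
    Primrec fun p : (List ℕ × ℕ) × ℕ => bJumpAttempt r₁ r₂ p.1.1 p.1.2 p.2 := by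
  have hσ : Primrec fun p : (List ℕ × ℕ) × ℕ => p.1.1 := Primrec.fst.comp Primrec.fst
  have hx : Primrec fun p : (List ℕ × ℕ) × ℕ => p.1.2 := Primrec.snd.comp Primrec.fst
  have hoddBit : ∀ {y : (List ℕ × ℕ) × ℕ → ℕ}, Primrec y →
      Primrec fun p => p.1.1[2 * y p + 1]? := fun hy =>
    Primrec.list_getElem?.comp hσ
      (Primrec.succ.comp (Primrec.nat_mul.comp (Primrec.const 2) hy))
  have hevens : Primrec fun p : (List ℕ × ℕ) × ℕ => evenPart p.1.1 p.2 :=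
    Primrec.list_map (Primrec.list_range.comp Primrec.snd)
      ((Primrec.list_getD 0).comp (hσ.comp Primrec.fst)
        (Primrec.nat_mul.comp (Primrec.const 2) Primrec.snd)).to₂
  exact Primrec.ite
    ((Primrec.eq.comp (hoddBit (hr₁.comp (hx.pair Primrec.snd))) (Primrec.const (some 0))).and
      (Primrec.nat_le.comp (Primrec.nat_mul.comp (Primrec.const 2) Primrec.snd)
        (Primrec.list_length.comp hσ)))
    (hoddBit (hr₂.comp (hevens.pair hx))) (Primrec.const none)

theorem bJumpAttempt_sound (hr₁K : ∀ q, r₁ q ∈ K ↔ outputsAbove q.1 q.2)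
    (hr₂K : ∀ q, r₂ q ∈ K ↔ haltsOnSegment q.1 q.2) {A : Set ℕ} {N x L b : ℕ}
    (hb : b ∈ bJumpAttempt r₁ r₂ (initSeg (join A K) N) x L) : b = chi (bJump A) x := by
  rw [bJumpAttempt, Option.mem_def] at hb
  split_ifs at hb with h
  obtain ⟨hr₁bit, hlen⟩ := h
  rw [getElem?_initSeg_join_odd] at hr₁bit hb
  rw [evenPart_initSeg_join A K (by rwa [length_initSeg] at hlen)] at hb
  have hL : ¬ outputsAbove x L := by
    split_ifs at hr₁bit
    simpa [chi, hr₁K] using hr₁bit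
  split_ifs at hb
  rw [← Option.some_inj.1 hb]
  exact chi_eq_chi_of_iff ((hr₂K _).trans (mem_bJump_iff_haltsOnSegment hL).symm)

theorem bJumpAttempt_isSome (hr₁K : ∀ q, r₁ q ∈ K ↔ outputsAbove q.1 q.2) {A : Set ℕ} {x L : ℕ}
    (hL : ¬ outputsAbove x L) :
    ∃ N, (bJumpAttempt r₁ r₂ (initSeg (join A K) N) x L).isSome := by
  refine ⟨max (2 * r₁ (x, L) + 2) (max (2 * L) (2 * r₂ (initSeg A L, x) + 2)), ?_⟩
  have hr₁bit : chi K (r₁ (x, L)) = 0 := by simpa [chi, hr₁K] using hL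
  simp only [bJumpAttempt, getElem?_initSeg_join_odd, length_initSeg]
  rw [evenPart_initSeg_join A K (by omega)]
  simp [hr₁bit]

end Attempt

/-- For any set `A`, the bounded jump `A^b` is Turing reducible to `A ⊕ ∅′`. -/
theorem bJump_TReducible_join (A : Set ℕ) : TReducible (bJump A) (join A K) := by
  obtain ⟨r₁, hr₁, hr₁K⟩ := rePred_outputsAbove.exists_primrec_reduction_K
  obtain ⟨r₂, hr₂, hr₂K⟩ := rePred_haltsOnSegment.exists_primrec_reduction_K
  refine TReducible.of_partrec (F := fun σ x => Nat.rfindOpt (bJumpAttempt r₁ r₂ σ x))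
    (Partrec.rfindOpt (primrec_bJumpAttempt hr₁ hr₂).to_comp) (fun x => ?_) fun x N b hb => ?_
  · obtain ⟨L, hL⟩ := exists_not_outputsAbove x
    obtain ⟨N, hN⟩ := bJumpAttempt_isSome (r₂ := r₂) hr₁K (A := A) hL
    exact ⟨N, Nat.rfindOpt_dom.2 ⟨L, Option.isSome_iff_exists.1 hN⟩⟩
  · obtain ⟨L, hb⟩ := Nat.rfindOpt_spec hb
    exact bJumpAttempt_sound hr₁K hr₂K hb
end

section
/- Let A ⊆ ℕ be 3-generic. Then A^b is not bounded Turing reducible to A ⊕ ∅′. -/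
open Classical

/-!
Suppose `Φ_e`, with use bounded by the total function `φ_j`, computes `A^b` from `A ⊕ ∅′`.
Padding a code for the functional that on input `x` just waits for the oracle bit at
`p(x) = max (φ_j x) x + 1` yields a primitive recursive sequence of indices `x_k ≥ k` with
`x_k ∈ A^b ↔ p(x_k) ∈ A`. Since `p(x_k)` lies beyond the use, the reduction at `x_k` only sees
`A` below `p(x_k)`. Let `S` consist of the strings `τ` of length `p(x_k) + 1`, for some `k`, such
that `Φ_e` with oracle `τ ⊕ ∅′` (cut at the use) outputs the negation of the last bit of `τ`.
Guessing `∅′` below the use and the length of the oracle string queried, and confirming the guess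
with one universal quantifier, shows that `S` is `Σ₂`. If `A` meets `S`, the reduction errs at the
corresponding `x_k`; if no extension of the first `l` bits of `A` lies in `S`, then the first
`p(x_l)` bits of `A` followed by the flipped bit `p(x_l)` form such an extension after all.
-/

open Nat.Partrec (Code)
open Nat.Partrec.Code Encodable Denumerable

theorem mem_join_iff {B C : Set ℕ} {n : ℕ} :
    n ∈ join B C ↔ (n % 2 = 0 ∧ n / 2 ∈ B) ∨ (n % 2 = 1 ∧ n / 2 ∈ C) := by
  constructor
  · rintro (⟨m, hm, rfl⟩ | ⟨m, hm, rfl⟩)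
    · left; simpa using hm
    · right; simp only [Nat.mul_add_mod, Nat.mul_add_div two_pos]; simpa using hm
  · rintro (⟨h2, hB⟩ | ⟨h2, hC⟩)
    · exact Or.inl ⟨n / 2, hB, by omega⟩
    · exact Or.inr ⟨n / 2, hC, by omega⟩

theorem restrictTo_join_congr {B B' C C' : Set ℕ} {w : ℕ}
    (hB : ∀ a ≤ w, a ∈ B ↔ a ∈ B') (hC : ∀ a ≤ w, a ∈ C ↔ a ∈ C') :
    restrictTo (join B C) w = restrictTo (join B' C') w := by
  ext m
  simp only [restrictTo, Set.mem_ofPred_eq, mem_join_iff, and_congr_left_iff]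
  intro hm
  rw [hB (m / 2) (by omega), hC (m / 2) (by omega)]

theorem chi_eq_one_iff {A : Set ℕ} {n : ℕ} : chi A n = 1 ↔ n ∈ A := by
  unfold chi; split_ifs <;> simp_all

theorem getD_initSeg_eq_one_iff {B : Set ℕ} {n i : ℕ} :
    (initSeg B n).getD i 0 = 1 ↔ i < n ∧ i ∈ B := by
  by_cases hi : i < n
  · simp [initSeg, List.getD_eq_getElem?_getD, hi, chi_eq_one_iff]
  · simp [initSeg, List.getD_eq_getElem?_getD, hi]

def setOfBits (τ : List Bool) : Set ℕ := {a | τ.getD a false = true}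

theorem getD_initSegB {A : Set ℕ} {n i : ℕ} (hi : i < n) :
    (initSegB A n).getD i false = decide (i ∈ A) := by
  simp [initSegB, List.getD_eq_getElem?_getD, hi]

theorem initSegB_length (A : Set ℕ) (n : ℕ) : (initSegB A n).length = n := by
  simp [initSegB]

theorem initSegB_prefix (A : Set ℕ) {m n : ℕ} (h : m ≤ n) : initSegB A m <+: initSegB A n := by
  rw [show initSegB A m = (initSegB A n).take m by
    rw [initSegB, initSegB, ← List.map_take, List.take_range, min_eq_left h]]
  exact List.take_prefix _ _

theorem mem_setOfBits_iff_of_prefix {A : Set ℕ} {τ : List Bool} {n a : ℕ}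
    (hτ : initSegB A n <+: τ) (ha : a < n) : a ∈ setOfBits τ ↔ a ∈ A := by
  obtain ⟨ρ, rfl⟩ := hτ
  have hlen : a < (initSegB A n).length := by rwa [initSegB_length]
  simp only [setOfBits, Set.mem_ofPred_eq, List.getD_append _ _ _ _ hlen, getD_initSegB ha,
    decide_eq_true_eq]

theorem SigmaN.succ {n : ℕ} {S : Set ℕ} (hS : SigmaN n S) : SigmaN (n + 1) S := by
  induction n generalizing S with
  | zero =>
    refine ⟨{v | v.unpair.1 ∉ S}, ?_, ?_⟩
    · exact (ComputablePred.computable_of_manyOneReducible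
        ⟨_, Computable.fst.comp Computable.unpair, fun _ => Iff.rfl⟩ hS).not
    · ext x
      simp
  | succ n ih =>
    obtain ⟨R, hR, rfl⟩ := hS
    exact ⟨R, ih hR, rfl⟩

theorem SigmaN.mono {m n : ℕ} (hmn : m ≤ n) {S : Set ℕ} (hS : SigmaN m S) : SigmaN n S := by
  induction n, hmn using Nat.le_induction with
  | base => exact hS
  | succ n _ ih => exact ih.succ

theorem NGeneric.mono {m n : ℕ} (hmn : m ≤ n) {A : Set ℕ} (hA : NGeneric n A) : NGeneric m A :=
  fun S hS => hA S (hS.mono hmn)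

theorem SigmaN.two_of_computablePred {α β : Type} [Denumerable α] [Denumerable β]
    {R : ℕ → α → β → Prop} (hR : ComputablePred fun q : ℕ × α × β => R q.1 q.2.1 q.2.2) :
    SigmaN 2 {m | ∃ a, ∀ b, R m a b} := by
  let R₀ : Set ℕ :=
    {y | R y.unpair.1.unpair.1 (ofNat α y.unpair.1.unpair.2) (ofNat β y.unpair.2)}
  have hR₀ : SigmaN 0 R₀ := ComputablePred.computable_of_manyOneReducible
    ⟨_, (Computable.fst.comp (Computable.unpair.comp (Computable.fst.comp Computable.unpair))).pair
      (((Computable.ofNat α).comp (Computable.snd.comp (Computable.unpair.comp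
        (Computable.fst.comp Computable.unpair)))).pair
      ((Computable.ofNat β).comp (Computable.snd.comp Computable.unpair))), fun _ => Iff.rfl⟩ hR
  refine ⟨_, ⟨R₀, hR₀, rfl⟩, ?_⟩
  ext m
  simp only [Set.mem_ofPred_eq, Nat.unpair_pair, not_exists, not_not, R₀]
  exact ⟨fun ⟨a, ha⟩ => ⟨encode a, fun z => by simpa using ha (ofNat β z)⟩,
    fun ⟨y, hy⟩ => ⟨ofNat α y, fun b => by simpa using hy (encode b)⟩⟩

section PrimrecSets

variable {α : Type*} [Primcodable α]

theorem PrimrecPred.imp {p q : α → Prop} (hp : PrimrecPred p) (hq : PrimrecPred q) :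
    PrimrecPred fun a => p a → q a :=
  (hp.not.or hq).of_eq fun _ => imp_iff_not_or.symm

theorem PrimrecRel.chi {B : α → Set ℕ} (hB : PrimrecRel fun a i => i ∈ B a) :
    Primrec₂ fun a i => chi (B a) i :=
  Primrec.ite hB (Primrec.const 1) (Primrec.const 0)

theorem PrimrecRel.initSeg {B : α → Set ℕ} (hB : PrimrecRel fun a i => i ∈ B a) :
    Primrec₂ fun a n => initSeg (B a) n :=
  Primrec.list_map (Primrec.list_range.comp Primrec.snd)
    ((hB.chi.comp (Primrec.fst.comp Primrec.fst) Primrec.snd).to₂)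

theorem PrimrecRel.join {B C : α → Set ℕ} (hB : PrimrecRel fun a i => i ∈ B a)
    (hC : PrimrecRel fun a i => i ∈ C a) : PrimrecRel fun a i => i ∈ join (B a) (C a) := by
  have hmod : Primrec₂ fun (_ : α) (i : ℕ) => i % 2 :=
    Primrec.nat_mod.comp Primrec.snd (Primrec.const 2)
  have hdiv : Primrec₂ fun (_ : α) (i : ℕ) => i / 2 :=
    Primrec.nat_div.comp Primrec.snd (Primrec.const 2)
  refine (((Primrec.eq.comp hmod (Primrec.const 0)).and (hB.comp Primrec.fst hdiv)).or
    ((Primrec.eq.comp hmod (Primrec.const 1)).and (hC.comp Primrec.fst hdiv))).of_eq ?_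
  rintro ⟨a, i⟩
  exact mem_join_iff.symm

theorem PrimrecRel.restrictTo {B : α → Set ℕ} (hB : PrimrecRel fun a i => i ∈ B a) {w : α → ℕ}
    (hw : Primrec w) : PrimrecRel fun a i => i ∈ _root_.restrictTo (B a) (w a) :=
  (hB.and (Primrec.nat_le.comp Primrec.snd (hw.comp Primrec.fst))).of_eq fun _ => Iff.rfl

end PrimrecSets

theorem primrecRel_mem_setOfBits : PrimrecRel fun τ a => a ∈ setOfBits τ :=
  (Primrec.eq.comp (Primrec.list_getD false) (Primrec.const true)).of_eq fun _ => Iff.rfl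

theorem phi_partrec (j : ℕ) : Partrec (phi j) :=
  eval_part.comp (Computable.const (ofNat Code j)) Computable.id

theorem exists_index {f : ℕ →. ℕ} (hf : Partrec f) : ∃ i, phi i = f := by
  obtain ⟨c, hc⟩ := Code.exists_code.1 (Partrec.nat_iff.1 hf)
  exact ⟨encode c, by rw [phi, ofNat_encode, hc]⟩

theorem forall_evaln_eq_none_iff {c y : ℕ} :
    (∀ t, evaln t (ofNat Code c) y = none) ↔ ¬(phi c y).Dom := by
  refine ⟨fun h hd => ?_, fun h t => Option.eq_none_iff_forall_not_mem.2 fun v hv => ?_⟩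
  · obtain ⟨v, hv⟩ := Part.dom_iff_mem.1 hd
    obtain ⟨t, ht⟩ := evaln_complete.1 hv
    simp [h t] at ht
  · exact h (Part.dom_iff_mem.2 ⟨v, evaln_sound hv⟩)

theorem Phi_eq_some_iff {e : ℕ} {B : Set ℕ} {x v : ℕ} :
    Phi e B x = Part.some v ↔
      ∃ n, v ∈ phi e (Nat.pair (encode (initSeg B n)) x) ∧
        ∀ i < n, ¬(phi e (Nat.pair (encode (initSeg B i)) x)).Dom := by
  constructor
  · intro hE
    obtain ⟨h, hget⟩ := Part.eq_some_iff.1 hE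
    exact ⟨Nat.find h, hget ▸ Part.get_mem _, fun i hi => Nat.find_min h hi⟩
  · rintro ⟨n, hv, hmin⟩
    have hdom : (Phi e B x).Dom := ⟨n, Part.dom_iff_mem.2 ⟨v, hv⟩⟩
    have hfind : Nat.find hdom = n :=
      (Nat.find_eq_iff hdom).2 ⟨Part.dom_iff_mem.2 ⟨v, hv⟩, hmin⟩
    have hv' : v ∈ phi e (Nat.pair (encode (initSeg B (Nat.find hdom))) x) := hfind ▸ hv
    exact Part.eq_some_iff.2 ⟨hdom, Part.get_eq_of_mem hv' _⟩

def Kstage (s : ℕ) : Set ℕ := {a | (evaln s (ofNat Code a) a).isSome}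

theorem Kstage_subset (s : ℕ) : Kstage s ⊆ K := fun a ha => by
  obtain ⟨v, hv⟩ := Option.isSome_iff_exists.1 ha
  exact Part.dom_iff_mem.2 ⟨v, evaln_sound hv⟩

theorem Kstage_mono {s s' : ℕ} (h : s ≤ s') : Kstage s ⊆ Kstage s' := fun a ha => by
  obtain ⟨v, hv⟩ := Option.isSome_iff_exists.1 ha
  exact Option.isSome_iff_exists.2 ⟨v, evaln_mono h hv⟩

theorem exists_mem_Kstage (a : ℕ) (ha : a ∈ K) : ∃ s, a ∈ Kstage s := by
  obtain ⟨v, hv⟩ := Part.dom_iff_mem.1 ha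
  obtain ⟨s, hs⟩ := evaln_complete.1 hv
  exact ⟨s, Option.isSome_iff_exists.2 ⟨v, hs⟩⟩

theorem exists_Kstage_eq_on (w : ℕ) : ∃ s, ∀ a ≤ w, a ∈ Kstage s ↔ a ∈ K := by
  have : ∀ a, ∃ s, a ∈ K → a ∈ Kstage s := fun a => by
    by_cases ha : a ∈ K
    · exact (exists_mem_Kstage a ha).imp fun _ h _ => h
    · exact ⟨0, fun h => absurd h ha⟩
  choose f hf using this
  refine ⟨(Finset.range (w + 1)).sup f, fun a ha => ⟨fun h => Kstage_subset _ h, fun hK => ?_⟩⟩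
  exact Kstage_mono (Finset.le_sup (Finset.mem_range.2 (Nat.lt_succ_of_le ha))) (hf a hK)

theorem primrecRel_mem_Kstage : PrimrecRel fun s a => a ∈ Kstage s :=
  (Primrec.eq.comp (Primrec.option_isSome.comp (primrec_evaln.comp
    ((Primrec.fst.pair ((Primrec.ofNat Code).comp Primrec.snd)).pair Primrec.snd)))
    (Primrec.const true)).of_eq fun _ => Iff.rfl

def padStep (n : ℕ) : ℕ := encode ((ofNat Code n).comp Code.id)

def padIndex (c k : ℕ) : ℕ := padStep^[k] c

theorem phi_padStep (n : ℕ) : phi (padStep n) = phi n := by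
  funext x
  simp only [phi, padStep, ofNat_encode, eval, eval_id]
  exact Part.bind_some _ _

theorem lt_padStep (n : ℕ) : n < padStep n := by
  simpa [padStep] using (encode_lt_comp (ofNat Code n) Code.id).1

theorem phi_padIndex (c k : ℕ) : phi (padIndex c k) = phi c := by
  induction k with
  | zero => rfl
  | succ k ih => rw [padIndex, Function.iterate_succ_apply', phi_padStep, ← padIndex, ih]

theorem add_le_padIndex (c k : ℕ) : c + k ≤ padIndex c k := by
  induction k with
  | zero => rfl
  | succ k ih =>
    have := lt_padStep (padIndex c k)
    rw [padIndex, Function.iterate_succ_apply', ← padIndex]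
    omega

theorem primrec_padIndex (c : ℕ) : Primrec (padIndex c) :=
  Primrec.nat_iterate Primrec.id (Primrec.const c)
    ((Primrec.encode.comp (primrec₂_comp.comp ((Primrec.ofNat Code).comp Primrec.snd)
      (Primrec.const Code.id))).to₂)

def diagFun (j : ℕ) : ℕ →. ℕ := fun m =>
  (phi j m.unpair.2).bind fun w =>
    if ((decode m.unpair.1 : Option (List ℕ)).getD []).getD (max w m.unpair.2 + 1) 0 = 1
    then Part.some 0 else Part.none

theorem diagFun_partrec (j : ℕ) : Partrec (diagFun j) := by
  refine ((phi_partrec j).comp (Computable.snd.comp Computable.unpair)).bind ?_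
  have hcond : PrimrecPred fun q : ℕ × ℕ =>
      ((decode q.1.unpair.1 : Option (List ℕ)).getD []).getD (max q.2 q.1.unpair.2 + 1) 0 = 1 :=
    Primrec.eq.comp ((Primrec.list_getD 0).comp
      (Primrec.option_getD.comp (Primrec.decode.comp (Primrec.fst.comp
        (Primrec.unpair.comp Primrec.fst))) (Primrec.const []))
      (Primrec.succ.comp (Primrec.nat_max.comp Primrec.snd
        (Primrec.snd.comp (Primrec.unpair.comp Primrec.fst))))) (Primrec.const 1)
  refine (Computable.ofOption (Primrec.ite hcond (Primrec.const (some 0))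
    (Primrec.const none)).to_comp).to₂.of_eq fun q => ?_
  dsimp only
  split_ifs <;> rfl

theorem Phi_dom_iff_of_phi_eq_diagFun {j x w : ℕ} (hx : phi x = diagFun j) (hw : w ∈ phi j x)
    (B : Set ℕ) : (Phi x B x).Dom ↔ max w x + 1 ∈ B := by
  have hdom : ∀ n, (phi x (Nat.pair (encode (initSeg B n)) x)).Dom ↔
      max w x + 1 < n ∧ max w x + 1 ∈ B := fun n => by
    simp only [hx, diagFun, Nat.unpair_pair, encodek, Option.getD_some,
      Part.eq_some_iff.2 hw, Part.bind_some, ← getD_initSeg_eq_one_iff]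
    split_ifs with h <;> simp only [h, Part.some_dom, Part.not_none_dom]
  exact ⟨fun ⟨n, hn⟩ => ((hdom n).1 hn).2, fun h => ⟨_, (hdom _).2 ⟨Nat.lt_succ_self _, h⟩⟩⟩

theorem mem_bJump_iff_of_phi_eq_diagFun {A : Set ℕ} {j x w i₀ : ℕ} (hx : phi x = diagFun j)
    (hw : w ∈ phi j x) (hi₀ : i₀ ≤ x) (hbound : max w x + 1 ∈ phi i₀ x) :
    x ∈ bJump A ↔ max w x + 1 ∈ A := by
  constructor
  · rintro ⟨i, -, hd, hPhi⟩
    exact ((Phi_dom_iff_of_phi_eq_diagFun hx hw _).1 hPhi).1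
  · intro hA
    refine ⟨i₀, hi₀, Part.dom_iff_mem.2 ⟨_, hbound⟩, ?_⟩
    rw [Part.get_eq_of_mem hbound, Phi_dom_iff_of_phi_eq_diagFun hx hw]
    exact ⟨hA, le_rfl⟩

theorem exists_primrec_bJump_indices (j : ℕ) :
    ∃ idx : ℕ → ℕ, Primrec idx ∧ ∀ k, k ≤ idx k ∧
      ∀ (A : Set ℕ), ∀ w ∈ phi j (idx k), idx k ∈ bJump A ↔ max w (idx k) + 1 ∈ A := by
  obtain ⟨i₀, hi₀⟩ := exists_index ((phi_partrec j).map
    ((Primrec.succ.comp (Primrec.nat_max.comp Primrec.snd Primrec.fst)).to₂).to_comp)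
  obtain ⟨c, hc⟩ := exists_index (diagFun_partrec j)
  refine ⟨fun k => padIndex c (i₀ + k), (primrec_padIndex c).comp
    (Primrec.nat_add.comp (Primrec.const i₀) Primrec.id), fun k => ?_⟩
  dsimp only
  have hle := add_le_padIndex c (i₀ + k)
  refine ⟨by omega, fun A w hw => mem_bJump_iff_of_phi_eq_diagFun (i₀ := i₀)
    (by rw [phi_padIndex, hc]) hw (by omega) ?_⟩
  rw [hi₀]
  exact Part.mem_map _ hw

def Refuting (e j : ℕ) (idx : ℕ → ℕ) (τ : List Bool) : Prop :=
  ∃ k w, w ∈ phi j (idx k) ∧ τ.length = max w (idx k) + 2 ∧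
    Phi e (restrictTo (join (setOfBits τ) K) w) (idx k) =
      Part.some (if τ.getD (max w (idx k) + 1) false then 0 else 1)

theorem Phi_join_setOfBits_eq_flip_iff {A : Set ℕ} {e w x : ℕ} {τ : List Bool}
    (hτ : initSegB A (max w x + 1) <+: τ)
    (hred : Phi e (restrictTo (join A K) w) x = Part.some (chi (bJump A) x))
    (hbJ : x ∈ bJump A ↔ max w x + 1 ∈ A) :
    Phi e (restrictTo (join (setOfBits τ) K) w) x =
        Part.some (if τ.getD (max w x + 1) false then 0 else 1) ↔
      τ.getD (max w x + 1) false ≠ decide (max w x + 1 ∈ A) := by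
  rw [restrictTo_join_congr (fun a ha => mem_setOfBits_iff_of_prefix hτ (by omega))
    (fun _ _ => Iff.rfl), hred, Part.some_inj, chi]
  by_cases hp : max w x + 1 ∈ A <;> cases τ.getD (max w x + 1) false <;> simp [hbJ, hp]

/-- The witness `(k, w, s, n)` guesses `φ_j(x_k) = w` together with a stage `s` by which `∅′` has
settled below `w` and `Φ_e` has converged on the oracle string of length `n`; the universal
`(t, i)` confirms that `∅′` has settled and that no shorter oracle string converges. -/
def refutingMatrix (e j : ℕ) (idx : ℕ → ℕ) (τ : List Bool) :
    ℕ × ℕ × ℕ × ℕ → ℕ × ℕ → Prop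
  | (k, w, s, n), (t, i) =>
    let x := idx k
    let σ := initSeg (restrictTo (join (setOfBits τ) (Kstage s)) w)
    evaln s (ofNat Code j) x = some w ∧ τ.length = max w x + 2 ∧
      evaln s (ofNat Code e) (Nat.pair (encode (σ n)) x) =
        some (if τ.getD (max w x + 1) false then 0 else 1) ∧
      (i ≤ w → i ∈ Kstage t → i ∈ Kstage s) ∧
      (i < n → evaln t (ofNat Code e) (Nat.pair (encode (σ i)) x) = none)

theorem refuting_iff_exists_forall (e j : ℕ) (idx : ℕ → ℕ) (τ : List Bool) :
    Refuting e j idx τ ↔ ∃ a, ∀ b, refutingMatrix e j idx τ a b := by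
  constructor
  · rintro ⟨k, w, hw, hlen, hPhi⟩
    obtain ⟨n, hv, hmin⟩ := Phi_eq_some_iff.1 hPhi
    obtain ⟨sj, hsj⟩ := evaln_complete.1 hw
    obtain ⟨sK, hsK⟩ := exists_Kstage_eq_on w
    obtain ⟨se, hse⟩ := evaln_complete.1 hv
    set s := max sj (max sK se)
    have hKs : ∀ a ≤ w, a ∈ Kstage s ↔ a ∈ K := fun a ha =>
      ⟨fun h => Kstage_subset _ h, fun h => Kstage_mono (by omega) ((hsK a ha).2 h)⟩
    have hB := restrictTo_join_congr (B := setOfBits τ) (fun _ _ => Iff.rfl) hKs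
    refine ⟨(k, w, s, n), fun ⟨t, i⟩ => ?_⟩
    simp only [refutingMatrix, hB]
    refine ⟨evaln_mono (by omega) hsj, hlen, evaln_mono (by omega) hse,
      fun hi hit => (hKs i hi).2 (Kstage_subset _ hit), fun hi => ?_⟩
    exact forall_evaln_eq_none_iff.2 (hmin i hi) t
  · rintro ⟨⟨k, w, s, n⟩, h⟩
    obtain ⟨hw, hlen, hv, -⟩ := h (0, 0)
    have hKs : ∀ a ≤ w, a ∈ Kstage s ↔ a ∈ K := fun a ha => by
      refine ⟨fun h => Kstage_subset _ h, fun hK => ?_⟩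
      obtain ⟨t, ht⟩ := exists_mem_Kstage a hK
      exact (h (t, a)).2.2.2.1 ha ht
    have hB := restrictTo_join_congr (B := setOfBits τ) (fun _ _ => Iff.rfl) hKs
    simp only [refutingMatrix, hB] at hv h
    refine ⟨k, w, evaln_sound hw, hlen, Phi_eq_some_iff.2 ⟨n, evaln_sound hv, fun i hi => ?_⟩⟩
    exact forall_evaln_eq_none_iff.1 fun t => (h (t, i)).2.2.2.2 hi

local notation "Q" => List Bool × (ℕ × ℕ × ℕ × ℕ) × (ℕ × ℕ)

theorem refutingMatrix_primrec (e j : ℕ) {idx : ℕ → ℕ} (hidx : Primrec idx) :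
    PrimrecPred fun q : Q => refutingMatrix e j idx q.1 q.2.1 q.2.2 := by
  have ha : Primrec fun q : Q => q.2.1 := Primrec.fst.comp Primrec.snd
  have hb : Primrec fun q : Q => q.2.2 := Primrec.snd.comp Primrec.snd
  have hx : Primrec fun q : Q => idx q.2.1.1 := hidx.comp (Primrec.fst.comp ha)
  have hw : Primrec fun q : Q => q.2.1.2.1 := Primrec.fst.comp (Primrec.snd.comp ha)
  have hs : Primrec fun q : Q => q.2.1.2.2.1 :=
    Primrec.fst.comp (Primrec.snd.comp (Primrec.snd.comp ha))
  have hn : Primrec fun q : Q => q.2.1.2.2.2 :=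
    Primrec.snd.comp (Primrec.snd.comp (Primrec.snd.comp ha))
  have ht : Primrec fun q : Q => q.2.2.1 := Primrec.fst.comp hb
  have hi : Primrec fun q : Q => q.2.2.2 := Primrec.snd.comp hb
  have hbits : PrimrecRel fun (q : Q) (m : ℕ) => m ∈ setOfBits q.1 :=
    primrecRel_mem_setOfBits.comp (Primrec.fst.comp Primrec.fst) Primrec.snd
  have hKset : PrimrecRel fun (q : Q) (m : ℕ) => m ∈ Kstage q.2.1.2.2.1 :=
    primrecRel_mem_Kstage.comp (hs.comp Primrec.fst) Primrec.snd
  have hσ : Primrec₂ fun (q : Q) (m : ℕ) =>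
      initSeg (restrictTo (join (setOfBits q.1) (Kstage q.2.1.2.2.1)) q.2.1.2.1) m :=
    ((hbits.join hKset).restrictTo hw).initSeg
  have hevalσ {u m : Q → ℕ} (hu : Primrec u) (hm : Primrec m) : Primrec fun q : Q =>
      evaln (u q) (ofNat Code e) (Nat.pair (encode
        (initSeg (restrictTo (join (setOfBits q.1) (Kstage q.2.1.2.2.1)) q.2.1.2.1) (m q)))
        (idx q.2.1.1)) :=
    primrec_evaln.comp ((hu.pair (Primrec.const _)).pair
      (Primrec₂.natPair.comp (Primrec.encode.comp (hσ.comp Primrec.id hm)) hx))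
  have hp := Primrec.succ.comp (Primrec.nat_max.comp hw hx)
  have hflip := Primrec.ite
    (Primrec.eq.comp ((Primrec.list_getD false).comp Primrec.fst hp) (Primrec.const true))
    (Primrec.const 0) (Primrec.const 1)
  have hbound := Primrec.eq.comp
    (primrec_evaln.comp ((hs.pair (Primrec.const (ofNat Code j))).pair hx))
    (Primrec.option_some.comp hw)
  have hlen := Primrec.eq.comp (Primrec.list_length.comp Primrec.fst) (Primrec.succ.comp hp)
  have hconv := Primrec.eq.comp (hevalσ hs hn) (Primrec.option_some.comp hflip)
  have hsettled := (Primrec.nat_le.comp hi hw).imp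
    ((primrecRel_mem_Kstage.comp ht hi).imp (primrecRel_mem_Kstage.comp hs hi))
  have hminimal := (Primrec.nat_lt.comp hi hn).imp
    (Primrec.eq.comp (hevalσ ht hi) (Primrec.const none))
  refine (hbound.and (hlen.and (hconv.and (hsettled.and hminimal)))).of_eq ?_
  rintro ⟨τ, ⟨k, w, s, n⟩, ⟨t, i⟩⟩
  rfl

theorem sigmaN_two_refuting (e j : ℕ) {idx : ℕ → ℕ} (hidx : Primrec idx) :
    SigmaN 2 {m | Refuting e j idx ((decode m).getD [])} := by
  have hdecode : Primrec fun m : ℕ => (decode m : Option (List Bool)).getD [] :=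
    Primrec.option_getD.comp Primrec.decode (Primrec.const [])
  have := SigmaN.two_of_computablePred
    (R := fun m a b => refutingMatrix e j idx ((decode m).getD []) a b)
    ((refutingMatrix_primrec e j hidx).comp
      ((hdecode.comp Primrec.fst).pair Primrec.snd)).computablePred
  simpa only [refuting_iff_exists_forall] using this

/-- If `A` is 3-generic then `A^b` is not bounded Turing reducible to `A ⊕ ∅′`. -/
theorem bJump_not_bT_join_of_3generic (A : Set ℕ) (h : NGeneric 3 A) :
    ¬ bTReducible (bJump A) (join A K) := by
  rintro ⟨e, j, hj, hred⟩
  obtain ⟨idx, hidx, hidx_spec⟩ := exists_primrec_bJump_indices j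
  have key : ∀ k, ∀ w ∈ phi j (idx k), ∀ τ, initSegB A (max w (idx k) + 1) <+: τ →
      (Phi e (restrictTo (join (setOfBits τ) K) w) (idx k) =
        Part.some (if τ.getD (max w (idx k) + 1) false then 0 else 1) ↔
      τ.getD (max w (idx k) + 1) false ≠ decide (max w (idx k) + 1 ∈ A)) :=
    fun k w hw τ hτ => Phi_join_setOfBits_eq_flip_iff hτ
      (Part.get_eq_of_mem hw (hj _) ▸ hred _) ((hidx_spec k).2 A w hw)
  rcases h.mono (by norm_num) _ (sigmaN_two_refuting e j hidx) with ⟨l, hl⟩ | ⟨l, hl⟩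
  · simp only [Set.mem_ofPred_eq, encodek, Option.getD_some] at hl
    obtain ⟨k, w, hw, hlen, hPhi⟩ := hl
    rw [initSegB_length] at hlen
    exact (key k w hw _ (initSegB_prefix A (by omega))).1 hPhi (getD_initSegB (by omega))
  · set w := (phi j (idx l)).get (hj _)
    set p := max w (idx l) + 1
    have hlp : l ≤ p := by have := (hidx_spec l).1; omega
    refine hl (initSegB A p ++ [!decide (p ∈ A)])
      ((initSegB_prefix A hlp).trans (List.prefix_append _ _)) ?_
    simp only [Set.mem_ofPred_eq, encodek, Option.getD_some]
    refine ⟨l, w, Part.get_mem _, by simp [initSegB_length, p],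
      (key l w (Part.get_mem _) _ (List.prefix_append _ _)).2 ?_⟩
    simp [initSegB_length, p]
end
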